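/- arXiv:2605.23096 — 4 statements merged into one kernel-verified Lean document; each statement's English description precedes it below -/
import Mathlib

section
/- Let l_Δ ≤ 0 ≤ u_Δ with l_Δ < u_Δ, let l_x ≤ u_x and l_y ≤ u_y be real numbers, and let σ : ℝ → ℝ be differentiable on [min(l_x, l_y), max(u_x, u_y)] with ∂_l ≤ σ′(t) ≤ ∂_u for all t in that interval. Let p : ℝ → ℝ satisfy |p(t) − σ(t)| ≤ ε for all t ∈ [l_x, u_x]. Define α_l = (∂_l·u_Δ − ∂_u·l_Δ)/(u_Δ − l_Δ), α_u = (∂_u·u_Δ − ∂_l·l_Δ)/(u_Δ − l_Δ), β̂_l = −β̂_u = (∂_u − ∂_l)·l_Δ·u_Δ/(u_Δ − l_Δ), α = (α_l + α_u)/2, β_u = β̂_u + max((α_u − α)·l_Δ, (α_u − α)·u_Δ), and β_l = β̂_l + min((α_l − α)·l_Δ, (α_l − α)·u_Δ). Then for all x ∈ [l_x, u_x] and all Δ ∈ [l_Δ, u_Δ] with x − Δ ∈ [l_y, u_y], the parallel linear relaxation α·Δ + β_l − ε ≤ p(x) − σ(x − Δ) ≤ α·Δ + β_u + ε holds. -/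
private lemma lin_le_max {c l u d : ℝ} (h1 : l ≤ d) (h2 : d ≤ u) :
    c * d ≤ max (c * l) (c * u) := by
  rcases le_total 0 c with h | h
  · exact le_max_of_le_right (by nlinarith)
  · exact le_max_of_le_left (by nlinarith)

private lemma min_le_lin {c l u d : ℝ} (h1 : l ≤ d) (h2 : d ≤ u) :
    min (c * l) (c * u) ≤ c * d := by
  rcases le_total 0 c with h | h
  · exact min_le_of_left_le (by nlinarith)
  · exact min_le_of_right_le (by nlinarith)

/-- **$p$-$σ$ relaxation (Theorem 2).** Parallel linear relaxation of
`p x - σ (x - Δ)` for a polynomial approximation `p` of an activation `σ` with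
derivative bounds `∂l ≤ σ' ≤ ∂u` and approximation error `|p - σ| ≤ ε` on `[lx, ux]`. -/
theorem p_sigma_parallel_relaxation
    (lΔ uΔ lx ux ly uy dl du ε : ℝ)
    (σ p σ' : ℝ → ℝ)
    (hlΔ : lΔ ≤ 0) (huΔ : 0 ≤ uΔ) (hΔ : lΔ < uΔ)
    (hx : lx ≤ ux) (hy : ly ≤ uy)
    (hdiff : ∀ t ∈ Set.Icc (min lx ly) (max ux uy), HasDerivAt σ (σ' t) t)
    (hderiv : ∀ t ∈ Set.Icc (min lx ly) (max ux uy), dl ≤ σ' t ∧ σ' t ≤ du)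
    (hp : ∀ t ∈ Set.Icc lx ux, |p t - σ t| ≤ ε)
    (αl αu βhl βhu α βl βu : ℝ)
    (hαl : αl = (dl * uΔ - du * lΔ) / (uΔ - lΔ))
    (hαu : αu = (du * uΔ - dl * lΔ) / (uΔ - lΔ))
    (hβhl : βhl = (du - dl) * lΔ * uΔ / (uΔ - lΔ))
    (hβhu : βhu = -((du - dl) * lΔ * uΔ / (uΔ - lΔ)))
    (hα : α = (αl + αu) / 2)
    (hβu : βu = βhu + max ((αu - α) * lΔ) ((αu - α) * uΔ))
    (hβl : βl = βhl + min ((αl - α) * lΔ) ((αl - α) * uΔ)) :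
    ∀ x ∈ Set.Icc lx ux, ∀ Δ ∈ Set.Icc lΔ uΔ, x - Δ ∈ Set.Icc ly uy →
      α * Δ + βl - ε ≤ p x - σ (x - Δ) ∧ p x - σ (x - Δ) ≤ α * Δ + βu + ε := by
  intro x hxm Δ hΔm hym
  set I := Set.Icc (min lx ly) (max ux uy) with hI
  have hd : (0:ℝ) < uΔ - lΔ := sub_pos.2 hΔ
  have hcont : ContinuousOn σ I := fun t ht => (hdiff t ht).continuousAt.continuousWithinAt
  have hdiffOn : DifferentiableOn ℝ σ (interior I) := fun t ht =>
    ((hdiff t (interior_subset ht)).differentiableAt).differentiableWithinAt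
  have hlow : ∀ t ∈ interior I, dl ≤ deriv σ t := fun t ht => by
    rw [(hdiff t (interior_subset ht)).deriv]; exact (hderiv t (interior_subset ht)).1
  have hhigh : ∀ t ∈ interior I, deriv σ t ≤ du := fun t ht => by
    rw [(hdiff t (interior_subset ht)).deriv]; exact (hderiv t (interior_subset ht)).2
  have key_le := (convex_Icc _ _).mul_sub_le_image_sub_of_le_deriv hcont hdiffOn hlow
  have key_ge := (convex_Icc _ _).image_sub_le_mul_sub_of_deriv_le hcont hdiffOn hhigh
  have hxI : x ∈ I := ⟨le_trans (min_le_left _ _) hxm.1, le_trans hxm.2 (le_max_left _ _)⟩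
  have hyI : x - Δ ∈ I := ⟨le_trans (min_le_right _ _) hym.1, le_trans hym.2 (le_max_right _ _)⟩
  have hxlI : lx ∈ I := ⟨min_le_left _ _, le_trans hx (le_max_left _ _)⟩
  have hdudl : dl ≤ du := le_trans (hderiv lx hxlI).1 (hderiv lx hxlI).2
  -- MVT two-sided bounds
  have hmvt : min (dl * Δ) (du * Δ) ≤ σ x - σ (x - Δ) ∧
      σ x - σ (x - Δ) ≤ max (dl * Δ) (du * Δ) := by
    rcases le_total Δ 0 with hΔ0 | hΔ0
    · have hxy : x ≤ x - Δ := by linarith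
      have h1 := key_le x hxI (x - Δ) hyI hxy
      have h2 := key_ge x hxI (x - Δ) hyI hxy
      constructor
      · exact le_trans (min_le_right _ _) (by nlinarith)
      · exact le_trans (by nlinarith) (le_max_left _ _)
    · have hxy : x - Δ ≤ x := by linarith
      have h1 := key_le (x - Δ) hyI x hxI hxy
      have h2 := key_ge (x - Δ) hyI x hxI hxy
      constructor
      · exact le_trans (min_le_left _ _) (by nlinarith)
      · exact le_trans (by nlinarith) (le_max_right _ _)
  -- chord bounds
  have hau : αu * Δ + βhu = ((du * uΔ - dl * lΔ) * Δ - (du - dl) * lΔ * uΔ) / (uΔ - lΔ) := by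
    rw [hαu, hβhu]; field_simp; ring
  have hal : αl * Δ + βhl = ((dl * uΔ - du * lΔ) * Δ + (du - dl) * lΔ * uΔ) / (uΔ - lΔ) := by
    rw [hαl, hβhl]; field_simp
  have chord_u : max (dl * Δ) (du * Δ) ≤ αu * Δ + βhu := by
    rw [hau]
    apply max_le <;> rw [le_div_iff₀ hd] <;>
      nlinarith [mul_nonneg (sub_nonneg.2 hdudl)
          (mul_nonneg (neg_nonneg.2 hlΔ) (sub_nonneg.2 hΔm.2)),
        mul_nonneg (sub_nonneg.2 hdudl) (mul_nonneg huΔ (sub_nonneg.2 hΔm.1))]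
  have chord_l : αl * Δ + βhl ≤ min (dl * Δ) (du * Δ) := by
    rw [hal]
    apply le_min <;> rw [div_le_iff₀ hd] <;>
      nlinarith [mul_nonneg (sub_nonneg.2 hdudl)
          (mul_nonneg (neg_nonneg.2 hlΔ) (sub_nonneg.2 hΔm.2)),
        mul_nonneg (sub_nonneg.2 hdudl) (mul_nonneg huΔ (sub_nonneg.2 hΔm.1))]
  -- slope shift
  have shift_u : (αu - α) * Δ ≤ max ((αu - α) * lΔ) ((αu - α) * uΔ) :=
    lin_le_max hΔm.1 hΔm.2
  have shift_l : min ((αl - α) * lΔ) ((αl - α) * uΔ) ≤ (αl - α) * Δ :=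
    min_le_lin hΔm.1 hΔm.2
  have hpx := hp x hxm
  rw [abs_le] at hpx
  have hsplit : p x - σ (x - Δ) = (p x - σ x) + (σ x - σ (x - Δ)) := by ring
  constructor
  · rw [hsplit, hβl]
    have he : α * Δ + (αl - α) * Δ = αl * Δ := by ring
    linarith only [hmvt.1, chord_l, shift_l, hpx.1, he]
  · rw [hsplit, hβu]
    have he : α * Δ + (αu - α) * Δ = αu * Δ := by ring
    linarith only [hmvt.2, chord_u, shift_u, hpx.2, he]
end

section
/- Let l_Δ ≤ 0 ≤ u_Δ with l_Δ < u_Δ, let l_x ≤ u_x and l_y ≤ u_y be real numbers, and let σ : ℝ → ℝ be differentiable on [min(l_x, l_y), max(u_x, u_y)] with ∂_l ≤ σ′(t) ≤ ∂_u for all t in that interval. Define α_l = (∂_l·u_Δ − ∂_u·l_Δ)/(u_Δ − l_Δ), α_u = (∂_u·u_Δ − ∂_l·l_Δ)/(u_Δ − l_Δ), and β_l = −β_u = (∂_u − ∂_l)·l_Δ·u_Δ/(u_Δ − l_Δ). Then for all x ∈ [l_x, u_x] and all Δ ∈ [l_Δ, u_Δ] with x − Δ ∈ [l_y, u_y], one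 has α_l·Δ + β_l ≤ σ(x) − σ(x − Δ) ≤ α_u·Δ + β_u. -/
/-!
By the mean value theorem, `σ x - σ (x - Δ) = m * Δ` for some slope `m ∈ [∂l, ∂u]`, so it suffices
to bound the bilinear term `m * Δ` over the box `[∂l, ∂u] × [lΔ, uΔ]` by functions of `Δ` alone.
The lower bound is the chord through `(lΔ, ∂u * lΔ)` and `(uΔ, ∂l * uΔ)` of the concave function
`Δ ↦ min (∂l * Δ) (∂u * Δ)`, and the upper bound is the chord of the convex
`Δ ↦ max (∂l * Δ) (∂u * Δ)`; since `lΔ ≤ 0 ≤ uΔ`, both gaps factor as sums of products of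
nonnegative terms.
-/

open Set

theorem exists_mem_Icc_sub_eq_mul_sub_of_lt {f f' : ℝ → ℝ} {s : Set ℝ} [s.OrdConnected]
    {dl du : ℝ} (hf : ∀ t ∈ s, HasDerivAt f (f' t) t) (hf' : ∀ t ∈ s, f' t ∈ Icc dl du)
    {a b : ℝ} (ha : a ∈ s) (hb : b ∈ s) (hab : a < b) :
    ∃ m ∈ Icc dl du, f b - f a = m * (b - a) := by
  have hsub : Icc a b ⊆ s := Set.OrdConnected.out ‹_› ha hb
  obtain ⟨c, hc, hslope⟩ := exists_hasDerivAt_eq_slope f f' hab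
    (fun t ht => (hf t (hsub ht)).continuousAt.continuousWithinAt)
    (fun t ht => hf t (hsub (Ioo_subset_Icc_self ht)))
  refine ⟨f' c, hf' c (hsub (Ioo_subset_Icc_self hc)), ?_⟩
  rw [hslope, div_mul_cancel₀ _ (sub_ne_zero.2 hab.ne')]

theorem exists_mem_Icc_sub_eq_mul_sub {f f' : ℝ → ℝ} {s : Set ℝ} [s.OrdConnected]
    {dl du : ℝ} (hf : ∀ t ∈ s, HasDerivAt f (f' t) t) (hf' : ∀ t ∈ s, f' t ∈ Icc dl du)
    {a b : ℝ} (ha : a ∈ s) (hb : b ∈ s) :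
    ∃ m ∈ Icc dl du, f b - f a = m * (b - a) := by
  rcases lt_trichotomy a b with hab | rfl | hba
  · exact exists_mem_Icc_sub_eq_mul_sub_of_lt hf hf' ha hb hab
  · exact ⟨f' a, hf' a ha, by ring⟩
  · obtain ⟨m, hm, hfm⟩ := exists_mem_Icc_sub_eq_mul_sub_of_lt hf hf' hb ha hba
    exact ⟨m, hm, by linear_combination -hfm⟩

section Bilinear

variable {dl du lΔ uΔ m Δ : ℝ}

theorem chord_le_mul_of_mem_Icc (hlΔ : lΔ ≤ 0) (huΔ : 0 ≤ uΔ) (hΔ : lΔ < uΔ)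
    (hm : m ∈ Icc dl du) (hΔmem : Δ ∈ Icc lΔ uΔ) :
    (dl * uΔ - du * lΔ) / (uΔ - lΔ) * Δ + (du - dl) * lΔ * uΔ / (uΔ - lΔ) ≤ m * Δ := by
  have hright : 0 ≤ (m - dl) * uΔ * (Δ - lΔ) :=
    mul_nonneg (mul_nonneg (by linarith [hm.1]) huΔ) (by linarith [hΔmem.1])
  have hleft : 0 ≤ (du - m) * lΔ * (Δ - uΔ) :=
    mul_nonneg_of_nonpos_of_nonpos
      (mul_nonpos_of_nonneg_of_nonpos (by linarith [hm.2]) hlΔ) (by linarith [hΔmem.2])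
  rw [div_mul_eq_mul_div, ← add_div, div_le_iff₀ (by linarith)]
  linear_combination hright + hleft

theorem mul_le_chord_of_mem_Icc (hlΔ : lΔ ≤ 0) (huΔ : 0 ≤ uΔ) (hΔ : lΔ < uΔ)
    (hm : m ∈ Icc dl du) (hΔmem : Δ ∈ Icc lΔ uΔ) :
    m * Δ ≤ (du * uΔ - dl * lΔ) / (uΔ - lΔ) * Δ + -((du - dl) * lΔ * uΔ / (uΔ - lΔ)) := by
  have hright : 0 ≤ (du - m) * uΔ * (Δ - lΔ) :=
    mul_nonneg (mul_nonneg (by linarith [hm.2]) huΔ) (by linarith [hΔmem.1])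
  have hleft : 0 ≤ (m - dl) * lΔ * (Δ - uΔ) :=
    mul_nonneg_of_nonpos_of_nonpos
      (mul_nonpos_of_nonneg_of_nonpos (by linarith [hm.1]) hlΔ) (by linarith [hΔmem.2])
  rw [← sub_eq_add_neg, div_mul_eq_mul_div, div_sub_div_same, le_div_iff₀ (by linarith)]
  linear_combination hright + hleft

end Bilinear

theorem raven_relaxation_general
    (lΔ uΔ lx ux ly uy dl du : ℝ)
    (σ σ' : ℝ → ℝ)
    (hlΔ : lΔ ≤ 0) (huΔ : 0 ≤ uΔ) (hΔ : lΔ < uΔ)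
    (hdiff : ∀ t ∈ Set.Icc (min lx ly) (max ux uy), HasDerivAt σ (σ' t) t)
    (hderiv : ∀ t ∈ Set.Icc (min lx ly) (max ux uy), dl ≤ σ' t ∧ σ' t ≤ du)
    (αl αu βl βu : ℝ)
    (hαl : αl = (dl * uΔ - du * lΔ) / (uΔ - lΔ))
    (hαu : αu = (du * uΔ - dl * lΔ) / (uΔ - lΔ))
    (hβl : βl = (du - dl) * lΔ * uΔ / (uΔ - lΔ))
    (hβu : βu = -((du - dl) * lΔ * uΔ / (uΔ - lΔ))) :
    ∀ x ∈ Set.Icc lx ux, ∀ Δ ∈ Set.Icc lΔ uΔ, x - Δ ∈ Set.Icc ly uy →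
      αl * Δ + βl ≤ σ x - σ (x - Δ) ∧ σ x - σ (x - Δ) ≤ αu * Δ + βu := by
  intro x hx Δ hΔmem hy
  have hx' : x ∈ Icc (min lx ly) (max ux uy) :=
    Icc_subset_Icc (min_le_left _ _) (le_max_left _ _) hx
  have hy' : x - Δ ∈ Icc (min lx ly) (max ux uy) :=
    Icc_subset_Icc (min_le_right _ _) (le_max_right _ _) hy
  obtain ⟨m, hm, hσm⟩ := exists_mem_Icc_sub_eq_mul_sub hdiff hderiv hy' hx'
  rw [hσm, sub_sub_cancel, hαl, hβl, hαu, hβu]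
  exact ⟨chord_le_mul_of_mem_Icc hlΔ huΔ hΔ hm hΔmem, mul_le_chord_of_mem_Icc hlΔ huΔ hΔ hm hΔmem⟩

/-- **RaVeN relaxation (Lemma).** Linear (in `Δ`) lower and upper bounds for
`σ x - σ (x - Δ)` for an activation function `σ` with derivative bounds
`∂l ≤ σ' ≤ ∂u` over the hull of the intervals `[lx, ux]` and `[ly, uy]`,
in the case `lΔ ≤ 0 ≤ uΔ`. -/
theorem raven_relaxation
    (lΔ uΔ lx ux ly uy dl du : ℝ)
    (σ σ' : ℝ → ℝ)
    (hlΔ : lΔ ≤ 0) (huΔ : 0 ≤ uΔ) (hΔ : lΔ < uΔ)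
    (hx : lx ≤ ux) (hy : ly ≤ uy)
    (hdiff : ∀ t ∈ Set.Icc (min lx ly) (max ux uy), HasDerivAt σ (σ' t) t)
    (hderiv : ∀ t ∈ Set.Icc (min lx ly) (max ux uy), dl ≤ σ' t ∧ σ' t ≤ du)
    (αl αu βl βu : ℝ)
    (hαl : αl = (dl * uΔ - du * lΔ) / (uΔ - lΔ))
    (hαu : αu = (du * uΔ - dl * lΔ) / (uΔ - lΔ))
    (hβl : βl = (du - dl) * lΔ * uΔ / (uΔ - lΔ))
    (hβu : βu = -((du - dl) * lΔ * uΔ / (uΔ - lΔ))) :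
    ∀ x ∈ Set.Icc lx ux, ∀ Δ ∈ Set.Icc lΔ uΔ, x - Δ ∈ Set.Icc ly uy →
      αl * Δ + βl ≤ σ x - σ (x - Δ) ∧ σ x - σ (x - Δ) ≤ αu * Δ + βu :=
  raven_relaxation_general lΔ uΔ lx ux ly uy dl du σ σ' hlΔ huΔ hΔ hdiff hderiv αl αu βl βu hαl hαu
    hβl hβu
end

section
/- Let g : ℝ → ℝ, let l_Δ ≤ u_Δ be real numbers, and suppose α_l·Δ + β̂_l ≤ g(Δ) ≤ α_u·Δ + β̂_u for all Δ ∈ [l_Δ, u_Δ]. Define the mean slope α = (α_l + α_u)/2, the shifted offsets β_u = β̂_u + max((α_u − α)·l_Δ, (α_u − α)·u_Δ) and β_l = β̂_l + min((α_l − α)·l_Δ, (α_l − α)·u_Δ). Then the parallel relaxation α·Δ + β_l ≤ g(Δ) ≤ α·Δ + β_u holds for all Δ ∈ [l_Δ, u_Δ]. -/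
/-- **Parallelization of non-parallel linear relaxations.** Given linear lower
and upper bounds `αl·Δ + β̂l ≤ g Δ ≤ αu·Δ + β̂u` over `[lΔ, uΔ]`, the parallel
relaxation with the mean slope `α = (αl + αu)/2` and appropriately shifted
offsets is also valid over `[lΔ, uΔ]`. -/
theorem parallel_relaxation_of_linear_bounds
    (g : ℝ → ℝ) (lΔ uΔ αl αu βhl βhu α βl βu : ℝ)
    (hΔ : lΔ ≤ uΔ)
    (hbounds : ∀ Δ ∈ Set.Icc lΔ uΔ, αl * Δ + βhl ≤ g Δ ∧ g Δ ≤ αu * Δ + βhu)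
    (hα : α = (αl + αu) / 2)
    (hβu : βu = βhu + max ((αu - α) * lΔ) ((αu - α) * uΔ))
    (hβl : βl = βhl + min ((αl - α) * lΔ) ((αl - α) * uΔ)) :
    ∀ Δ ∈ Set.Icc lΔ uΔ, α * Δ + βl ≤ g Δ ∧ g Δ ≤ α * Δ + βu := by
  intro Δ hmem
  obtain ⟨h1, h2⟩ := hmem
  obtain ⟨hl, hu⟩ := hbounds Δ ⟨h1, h2⟩
  have hmax : (αu - α) * Δ ≤ max ((αu - α) * lΔ) ((αu - α) * uΔ) := by
    rcases le_total (αu - α) 0 with hc | hc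
    · exact le_max_of_le_left (by nlinarith)
    · exact le_max_of_le_right (by nlinarith)
  have hmin : min ((αl - α) * lΔ) ((αl - α) * uΔ) ≤ (αl - α) * Δ := by
    rcases le_total (αl - α) 0 with hc | hc
    · exact min_le_of_right_le (by nlinarith)
    · exact min_le_of_left_le (by nlinarith)
  constructor
  · rw [hβl]; nlinarith
  · rw [hβu]; nlinarith
end

section
/- The GELU function has a unique global minimizer x* and x* ∈ (−√2, 0): the derivative GELU′(x) = Φ(x) + x·φ(x) has exactly one real zero x*, it lies in the open interval (−√2, 0), GELU is strictly decreasing on (−∞, x*] and strictly increasing on [x*, ∞). -/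
/-- The standard normal density `φ(x) = (1/√(2π))·exp(−x²/2)`. -/
noncomputable def stdGaussianPDF (x : ℝ) : ℝ :=
  (1 / Real.sqrt (2 * Real.pi)) * Real.exp (-x ^ 2 / 2)

/-- The standard normal cumulative distribution function `Φ(x) = ∫_{−∞}^{x} φ(t) dt`. -/
noncomputable def stdGaussianCDF (x : ℝ) : ℝ :=
  ∫ t in Set.Iic x, stdGaussianPDF t

/-- The GELU activation function `GELU(x) = x·Φ(x)`. -/
noncomputable def gelu (x : ℝ) : ℝ := x * stdGaussianCDF x

/-!
GELU′ = Φ + xφ has derivative (2 − x²)φ. It therefore decreases on (−∞, −√2] and, since it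
tends to 0 at −∞, is negative there; it increases on [−√2, √2] and is positive on [0, ∞)
because Φ > 0. So it changes sign exactly once, from negative to positive, at a point of
(−√2, 0), and GELU decreases before that point and increases after it.
-/

open Set Filter Topology MeasureTheory Real ProbabilityTheory

section IntegralIic

variable {E : Type*} [NormedAddCommGroup E] [NormedSpace ℝ E] {f : ℝ → E}

lemma integral_Iic_eq_add_intervalIntegral (hf : Integrable f) (a b : ℝ) :
    ∫ t in Iic b, f t = (∫ t in Iic a, f t) + ∫ t in a..b, f t :=
  (sub_eq_iff_eq_add'.mp (intervalIntegral.integral_Iic_sub_Iic hf.integrableOn hf.integrableOn))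

lemma hasDerivAt_integral_Iic [CompleteSpace E] (hf : Integrable f) {x : ℝ}
    (hfx : ContinuousAt f x) :
    HasDerivAt (fun u ↦ ∫ t in Iic u, f t) (f x) x := by
  rw [funext (integral_Iic_eq_add_intervalIntegral hf x)]
  exact (intervalIntegral.integral_hasDerivAt_right hf.intervalIntegrable
    hf.aestronglyMeasurable.stronglyMeasurableAtFilter hfx).const_add _

lemma tendsto_integral_Iic_atBot (hf : Integrable f) :
    Tendsto (fun u ↦ ∫ t in Iic u, f t) atBot (𝓝 0) := by
  have h := (intervalIntegral_tendsto_integral_Iic 0 hf.integrableOn tendsto_id).const_sub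
    (∫ t in Iic 0, f t)
  rw [sub_self] at h
  refine h.congr fun u ↦ ?_
  rw [integral_Iic_eq_add_intervalIntegral hf u 0]
  simp

end IntegralIic

lemma StrictAntiOn.lt_of_tendsto_atBot {α β : Type*} [LinearOrder α] [NoMinOrder α]
    [TopologicalSpace β] [LinearOrder β] [OrderClosedTopology β] {g : α → β} {a : α} {l : β}
    (hg : StrictAntiOn g (Iic a)) (hlim : Tendsto g atBot (𝓝 l)) {x : α} (hx : x ≤ a) :
    g x < l := by
  have : Nonempty α := ⟨x⟩
  obtain ⟨y, hyx⟩ := exists_lt x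
  have hya : y ≤ a := hyx.le.trans hx
  have hgy : g y ≤ l := ge_of_tendsto hlim <| (eventually_le_atBot y).mono fun z hz ↦
    hg.antitoneOn (hz.trans hya) hya hz
  exact (hg hya hx hyx).trans_le hgy

lemma exists_sign_change_of_strictMonoOn {g : ℝ → ℝ} {a b : ℝ} (hcont : ContinuousOn g (Icc a b))
    (hmono : StrictMonoOn g (Icc a b)) (hneg : ∀ x ≤ a, g x < 0) (hpos : ∀ x ≥ b, 0 < g x) :
    ∃ c ∈ Ioo a b, g c = 0 ∧ (∀ x < c, g x < 0) ∧ ∀ x > c, 0 < g x := by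
  have hab : a < b := lt_of_not_ge fun hba ↦ (hneg b hba).not_gt (hpos b le_rfl)
  obtain ⟨c, hc, hgc⟩ := intermediate_value_Ioo hab.le hcont ⟨hneg a le_rfl, hpos b le_rfl⟩
  have hcI : c ∈ Icc a b := Ioo_subset_Icc_self hc
  refine ⟨c, hc, hgc, fun x hxc ↦ ?_, fun x hxc ↦ ?_⟩
  · rcases le_or_gt x a with hxa | hax
    · exact hneg x hxa
    · exact hgc ▸ hmono ⟨hax.le, hxc.le.trans hcI.2⟩ hcI hxc
  · rcases le_or_gt b x with hbx | hxb
    · exact hpos x hbx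
    · exact hgc ▸ hmono hcI ⟨hcI.1.trans hxc.le, hxb.le⟩ hxc

lemma stdGaussianPDF_eq_gaussianPDFReal : stdGaussianPDF = gaussianPDFReal 0 1 := by
  ext x
  simp [stdGaussianPDF, gaussianPDFReal]

lemma stdGaussianPDF_pos (x : ℝ) : 0 < stdGaussianPDF x := by
  unfold stdGaussianPDF
  positivity

lemma integrable_stdGaussianPDF : Integrable stdGaussianPDF :=
  stdGaussianPDF_eq_gaussianPDFReal ▸ integrable_gaussianPDFReal 0 1

lemma hasDerivAt_stdGaussianPDF (x : ℝ) :
    HasDerivAt stdGaussianPDF (-x * stdGaussianPDF x) x := by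
  refine (((hasDerivAt_pow 2 x).fun_neg.div_const 2).exp.const_mul (1 / √(2 * π))).congr_deriv ?_
  simp only [stdGaussianPDF]
  ring

lemma continuous_stdGaussianPDF : Continuous stdGaussianPDF :=
  continuous_iff_continuousAt.2 fun x ↦ (hasDerivAt_stdGaussianPDF x).continuousAt

lemma tendsto_mul_stdGaussianPDF_atBot :
    Tendsto (fun x ↦ x * stdGaussianPDF x) atBot (𝓝 0) := by
  have h := ((tendsto_rpow_abs_mul_exp_neg_mul_sq_cocompact one_half_pos 1).mono_left
    atBot_le_cocompact).const_mul (1 / √(2 * π))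
  rw [mul_zero] at h
  refine tendsto_zero_iff_norm_tendsto_zero.2 (h.congr fun x ↦ ?_)
  rw [rpow_one, norm_mul, Real.norm_eq_abs, Real.norm_eq_abs, abs_of_pos (stdGaussianPDF_pos x),
    stdGaussianPDF, show -(1 / 2) * x ^ 2 = -x ^ 2 / 2 by ring]
  ring

lemma hasDerivAt_stdGaussianCDF (x : ℝ) : HasDerivAt stdGaussianCDF (stdGaussianPDF x) x :=
  hasDerivAt_integral_Iic integrable_stdGaussianPDF continuous_stdGaussianPDF.continuousAt

lemma tendsto_stdGaussianCDF_atBot : Tendsto stdGaussianCDF atBot (𝓝 0) :=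
  tendsto_integral_Iic_atBot integrable_stdGaussianPDF

lemma stdGaussianCDF_pos (x : ℝ) : 0 < stdGaussianCDF x := by
  refine (setIntegral_pos_iff_support_of_nonneg_ae
    (ae_of_all _ fun t ↦ (stdGaussianPDF_pos t).le) integrable_stdGaussianPDF.integrableOn).2 ?_
  rw [eq_univ_of_forall fun t ↦ Function.mem_support.2 (stdGaussianPDF_pos t).ne', univ_inter,
    Real.volume_Iic]
  exact ENNReal.zero_lt_top

noncomputable def geluDeriv (x : ℝ) : ℝ := stdGaussianCDF x + x * stdGaussianPDF x

lemma hasDerivAt_gelu (x : ℝ) : HasDerivAt gelu (geluDeriv x) x := by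
  refine ((hasDerivAt_id x).mul (hasDerivAt_stdGaussianCDF x)).congr_deriv ?_
  simp only [geluDeriv, id_eq, one_mul]

lemma continuous_gelu : Continuous gelu :=
  continuous_iff_continuousAt.2 fun x ↦ (hasDerivAt_gelu x).continuousAt

lemma hasDerivAt_geluDeriv (x : ℝ) :
    HasDerivAt geluDeriv ((2 - x ^ 2) * stdGaussianPDF x) x := by
  refine ((hasDerivAt_stdGaussianCDF x).add
    ((hasDerivAt_id x).mul (hasDerivAt_stdGaussianPDF x))).congr_deriv ?_
  simp only [id_eq]
  ring

lemma continuous_geluDeriv : Continuous geluDeriv :=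
  continuous_iff_continuousAt.2 fun x ↦ (hasDerivAt_geluDeriv x).continuousAt

lemma strictAntiOn_geluDeriv : StrictAntiOn geluDeriv (Iic (-√2)) := by
  refine strictAntiOn_of_hasDerivWithinAt_neg (convex_Iic _) continuous_geluDeriv.continuousOn
    (fun x _ ↦ (hasDerivAt_geluDeriv x).hasDerivWithinAt) fun x hx ↦ ?_
  rw [interior_Iic] at hx
  have h2 : 2 < x ^ 2 := by simpa using lt_sq_of_sqrt_lt (lt_neg_of_lt_neg hx)
  exact mul_neg_of_neg_of_pos (by linarith) (stdGaussianPDF_pos x)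

lemma strictMonoOn_geluDeriv : StrictMonoOn geluDeriv (Icc (-√2) √2) := by
  refine strictMonoOn_of_hasDerivWithinAt_pos (convex_Icc _ _) continuous_geluDeriv.continuousOn
    (fun x _ ↦ (hasDerivAt_geluDeriv x).hasDerivWithinAt) fun x hx ↦ ?_
  rw [interior_Icc] at hx
  have h2 : x ^ 2 < 2 := Real.sq_lt.2 hx
  exact mul_pos (by linarith) (stdGaussianPDF_pos x)

lemma tendsto_geluDeriv_atBot : Tendsto geluDeriv atBot (𝓝 0) := by
  have h := tendsto_stdGaussianCDF_atBot.add tendsto_mul_stdGaussianPDF_atBot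
  rwa [add_zero] at h

lemma geluDeriv_neg_of_le_neg_sqrt_two {x : ℝ} (hx : x ≤ -√2) : geluDeriv x < 0 :=
  strictAntiOn_geluDeriv.lt_of_tendsto_atBot tendsto_geluDeriv_atBot hx

lemma geluDeriv_pos_of_nonneg {x : ℝ} (hx : 0 ≤ x) : 0 < geluDeriv x :=
  add_pos_of_pos_of_nonneg (stdGaussianCDF_pos x) (mul_nonneg hx (stdGaussianPDF_pos x).le)

/-- **Unique global minimizer of GELU.** The derivative `GELU′(x) = Φ(x) + x·φ(x)`
has exactly one real zero `x*`, it lies in `(−√2, 0)`, and GELU is strictly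
decreasing on `(−∞, x*]` and strictly increasing on `[x*, ∞)`. -/
theorem gelu_unique_global_minimizer :
    ∃ xs : ℝ,
      stdGaussianCDF xs + xs * stdGaussianPDF xs = 0 ∧
      (∀ y : ℝ, stdGaussianCDF y + y * stdGaussianPDF y = 0 → y = xs) ∧
      xs ∈ Set.Ioo (-Real.sqrt 2) 0 ∧
      StrictAntiOn gelu (Set.Iic xs) ∧
      StrictMonoOn gelu (Set.Ici xs) := by
  obtain ⟨xs, hxs, hzero, hneg, hpos⟩ := exists_sign_change_of_strictMonoOn
    continuous_geluDeriv.continuousOn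
    (strictMonoOn_geluDeriv.mono (Icc_subset_Icc_right (sqrt_nonneg 2)))
    (fun _ ↦ geluDeriv_neg_of_le_neg_sqrt_two) (fun _ ↦ geluDeriv_pos_of_nonneg)
  refine ⟨xs, hzero, fun y hy ↦ ?_, hxs, ?_, ?_⟩
  · rcases lt_trichotomy y xs with hlt | heq | hgt
    · exact absurd hy (hneg y hlt).ne
    · exact heq
    · exact absurd hy (hpos y hgt).ne'
  · refine strictAntiOn_of_hasDerivWithinAt_neg (convex_Iic xs) continuous_gelu.continuousOn
      (fun x _ ↦ (hasDerivAt_gelu x).hasDerivWithinAt) ?_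
    simpa using hneg
  · refine strictMonoOn_of_hasDerivWithinAt_pos (convex_Ici xs) continuous_gelu.continuousOn
      (fun x _ ↦ (hasDerivAt_gelu x).hasDerivWithinAt) ?_
    simpa using hpos
end
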